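/- arXiv:1910.09475 — 2 statements merged into one kernel-verified Lean document; each statement's English description precedes it below -/
import Mathlib

section
/- For all integers j, k, the series Σ_{t∈ℤ} ρ(t−j)* ρ(t−k) converges absolutely and equals ρ(j−k), where z* denotes complex conjugation. -/
open MeasureTheory Filter Topology Matrix

/-- Fourier coefficients of the indicator of the band `J`:
`ρ(t) = (1/(2π)) ∫_J e^{i t ω} dω`. -/
noncomputable def rho (J : Set ℝ) (t : ℤ) : ℂ :=
  (1 / (2 * Real.pi)) * ∫ ω in J, Complex.exp (Complex.I * (t : ℂ) * (ω : ℂ))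

/-- The `N × N` Toeplitz matrix with `(j,k)` entry `ρ(j - k)`. -/
noncomputable def Rmat (J : Set ℝ) (N : ℕ) : Matrix (Fin N) (Fin N) ℂ :=
  Matrix.of fun j k => rho J ((j : ℤ) - (k : ℤ))

/-!
The function `e_m = 1_J · e^{i m ω}`, viewed on the circle `ℝ / 2πℤ`, has Fourier coefficients
`ê_m(n) = ρ(m - n)`, and `conj e_{-j} · e_{-k} = e_{j-k}`. Parseval's identity for
`⟨e_{-j}, e_{-k}⟩` therefore reads, after `n ↦ -n`,
`∑ₙ conj ρ(n - j) ρ(n - k) = ê_{j-k}(0) = ρ(j - k)`,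
and the sum converges absolutely because both coefficient sequences are square summable.
-/

open Complex AddCircle ComplexConjugate

section Parseval

variable {T : ℝ} [Fact (0 < T)]

theorem MeasureTheory.MemLp.fourierCoeff_toLp {E : Type*} [NormedAddCommGroup E]
    [NormedSpace ℂ E] {p : ENNReal} {f : AddCircle T → E} (hf : MemLp f p AddCircle.haarAddCircle) :
    fourierCoeff (hf.toLp f) = fourierCoeff f :=
  fourierCoeff_congr_ae hf.coeFn_toLp

variable {f g : AddCircle T → ℂ}

theorem summable_sq_norm_fourierCoeff (hf : MemLp f 2 haarAddCircle) :
    Summable fun n => ‖fourierCoeff f n‖ ^ 2 := by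
  simpa only [hf.fourierCoeff_toLp] using (hasSum_sq_fourierCoeff (hf.toLp f)).summable

theorem summable_norm_conj_fourierCoeff_mul_fourierCoeff (hf : MemLp f 2 haarAddCircle)
    (hg : MemLp g 2 haarAddCircle) :
    Summable fun n => ‖conj (fourierCoeff f n) * fourierCoeff g n‖ := by
  refine Summable.of_nonneg_of_le (fun _ => norm_nonneg _) (fun n => ?_)
    (((summable_sq_norm_fourierCoeff hf).add (summable_sq_norm_fourierCoeff hg)).div_const 2)
  rw [norm_mul, RCLike.norm_conj, le_div_iff₀ two_pos, mul_comm, ← mul_assoc]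
  exact two_mul_le_add_sq _ _

theorem hasSum_conj_fourierCoeff_mul_fourierCoeff (hf : MemLp f 2 haarAddCircle)
    (hg : MemLp g 2 haarAddCircle) :
    HasSum (fun n => conj (fourierCoeff f n) * fourierCoeff g n)
      (∫ t, conj (f t) * g t ∂haarAddCircle) := by
  have hinner : ∫ t, conj (f t) * g t ∂haarAddCircle = inner ℂ (hf.toLp f) (hg.toLp g) := by
    rw [L2.inner_def]
    refine integral_congr_ae ?_
    filter_upwards [hf.coeFn_toLp, hg.coeFn_toLp] with t hft hgt
    rw [RCLike.inner_apply', hft, hgt]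
  have hterm (n : ℤ) : inner ℂ (hf.toLp f) (fourierBasis n) * inner ℂ (fourierBasis n) (hg.toLp g)
      = conj (fourierCoeff f n) * fourierCoeff g n := by
    rw [← inner_conj_symm, ← HilbertBasis.repr_apply_apply, ← HilbertBasis.repr_apply_apply,
      fourierBasis_repr, fourierBasis_repr, hf.fourierCoeff_toLp, hg.fourierCoeff_toLp]
  simpa only [hinner, hterm] using fourierBasis.hasSum_inner_mul_inner (hf.toLp f) (hg.toLp g)

end Parseval

section BandExp

instance : Fact (0 < 2 * Real.pi) := ⟨Real.two_pi_pos⟩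

noncomputable def bandExp (J : Set ℝ) (m : ℤ) : ℝ → ℂ :=
  J.indicator fun ω => exp (I * m * ω)

noncomputable def bandExpCircle (J : Set ℝ) (m : ℤ) : AddCircle (2 * Real.pi) → ℂ :=
  liftIoc (2 * Real.pi) (-Real.pi) (bandExp J m)

variable {J : Set ℝ}

theorem norm_bandExp_le (J : Set ℝ) (m : ℤ) (ω : ℝ) : ‖bandExp J m ω‖ ≤ 1 := by
  by_cases hω : ω ∈ J
  · rw [bandExp, Set.indicator_of_mem hω, norm_exp]
    simp [mul_re]
  · simp [bandExp, Set.indicator_of_notMem hω]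

theorem conj_bandExp_mul_bandExp (J : Set ℝ) (m n : ℤ) (ω : ℝ) :
    conj (bandExp J m ω) * bandExp J n ω = bandExp J (n - m) ω := by
  by_cases hω : ω ∈ J
  · simp only [bandExp, Set.indicator_of_mem hω]
    rw [← exp_conj, ← exp_add]
    congr 1
    simp only [map_mul, conj_I, map_intCast, conj_ofReal]
    push_cast
    ring
  · simp [bandExp, Set.indicator_of_notMem hω]

theorem conj_bandExpCircle_mul_bandExpCircle (J : Set ℝ) (m n : ℤ) (z : AddCircle (2 * Real.pi)) :
    conj (bandExpCircle J m z) * bandExpCircle J n z = bandExpCircle J (n - m) z :=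
  conj_bandExp_mul_bandExp J m n _

theorem measurable_bandExp (hJ : MeasurableSet J) (m : ℤ) : Measurable (bandExp J m) :=
  (by fun_prop : Measurable fun ω : ℝ => exp (I * m * ω)).indicator hJ

theorem measurable_bandExpCircle (hJ : MeasurableSet J) (m : ℤ) :
    Measurable (bandExpCircle J m) :=
  ((measurable_bandExp hJ m).comp measurable_subtype_coe).comp
    (measurableEquivIoc (2 * Real.pi) (-Real.pi)).measurable

theorem memLp_bandExpCircle (hJ : MeasurableSet J) (m : ℤ) :
    MemLp (bandExpCircle J m) 2 haarAddCircle :=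
  MemLp.of_bound (measurable_bandExpCircle hJ m).aestronglyMeasurable 1
    (ae_of_all _ fun _ => norm_bandExp_le J m _)

theorem fourierCoeff_bandExpCircle (hJ : MeasurableSet J)
    (hJsub : J ⊆ Set.Icc (-Real.pi) Real.pi) (m n : ℤ) :
    fourierCoeff (bandExpCircle J m) n = rho J (m - n) := by
  have hpointwise : ∀ ω ∈ Set.Ioc (-Real.pi) (-Real.pi + 2 * Real.pi),
      fourier (-n) (ω : AddCircle (2 * Real.pi)) • bandExpCircle J m ω = bandExp J (m - n) ω := by
    intro ω hω
    rw [bandExpCircle, liftIoc_coe_apply hω, fourier_coe_apply, smul_eq_mul]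
    by_cases hωJ : ω ∈ J
    · simp only [bandExp, Set.indicator_of_mem hωJ, ← exp_add]
      congr 1
      push_cast
      field_simp
      ring
    · simp [bandExp, Set.indicator_of_notMem hωJ]
  have hJ_eq : Set.Icc (-Real.pi) Real.pi ∩ J = J := Set.inter_eq_right.mpr hJsub
  rw [fourierCoeff_eq_intervalIntegral _ n (-Real.pi),
    intervalIntegral.integral_of_le (by linarith [Real.pi_pos]),
    setIntegral_congr_fun measurableSet_Ioc hpointwise, bandExp,
    show -Real.pi + 2 * Real.pi = Real.pi by ring, Measure.restrict_congr_set Ioc_ae_eq_Icc,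
    setIntegral_indicator hJ, hJ_eq, rho, real_smul]
  push_cast
  ring

end BandExp

/-- For all integers `j, k`, the series `Σ_{t∈ℤ} ρ(t-j)* ρ(t-k)` converges
absolutely and equals `ρ(j-k)`. -/
theorem stmt6 (J : Set ℝ) (hJmeas : MeasurableSet J)
    (hJsub : J ⊆ Set.Icc (-Real.pi) Real.pi) (j k : ℤ) :
    Summable (fun t : ℤ => ‖(starRingEnd ℂ) (rho J (t - j)) * rho J (t - k)‖) ∧
    ∑' t : ℤ, (starRingEnd ℂ) (rho J (t - j)) * rho J (t - k) = rho J (j - k) := by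
  have hcoeff (m t : ℤ) : rho J (t - m) = fourierCoeff (bandExpCircle J (-m)) (-t) := by
    rw [fourierCoeff_bandExpCircle hJmeas hJsub, neg_sub_neg]
  have hmemj := memLp_bandExpCircle hJmeas (-j)
  have hmemk := memLp_bandExpCircle hJmeas (-k)
  have hinner : ∫ z, conj (bandExpCircle J (-j) z) * bandExpCircle J (-k) z ∂haarAddCircle
      = rho J (j - k) := by
    have h0 := fourierCoeff_bandExpCircle hJmeas hJsub (j - k) 0
    rw [sub_zero] at h0
    simp_rw [conj_bandExpCircle_mul_bandExpCircle, neg_sub_neg, ← h0, fourierCoeff]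
    simp only [neg_zero, fourier_zero, one_smul]
  rw [← hinner]
  simp_rw [hcoeff]
  constructor
  · exact (Equiv.neg ℤ).summable_iff.mpr
      (summable_norm_conj_fourierCoeff_mul_fourierCoeff hmemj hmemk)
  · exact ((Equiv.neg ℤ).hasSum_iff.mpr
      (hasSum_conj_fourierCoeff_mul_fourierCoeff hmemj hmemk)).tsum_eq
end

section
/- Define 𝕁(N) := Σ_{j=1}^{N} λ_j(N)(1 − λ_j(N)). Then every summand is nonnegative and lim_{N→∞} 𝕁(N)/N = 0, i.e. 𝕁(N) = o(N). -/
open MeasureTheory Filter Topology Matrix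

/-! Since `λ(1 - λ) = λ - λ²`, `𝕁(N) = tr R_N - tr R_N² = N ρ(0) - ∑_{j,k<N} |ρ(j - k)|²`.
Parseval's identity for the indicator of `J` gives `∑_{t ∈ ℤ} |ρ(t)|² = ρ(0)`, and exactly
`N - min(N, |t|)` pairs `(j, k)` have `j - k = t`, so `𝕁(N) = ∑_t min(N, |t|) |ρ(t)|²`.
Dominated convergence then gives `𝕁(N)/N = ∑_t min(1, |t|/N) |ρ(t)|² → 0`. -/

open Finset

namespace Matrix.IsHermitian

variable {𝕜 n : Type*} [RCLike 𝕜] [Fintype n] [DecidableEq n] {A : Matrix n n 𝕜}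

theorem trace_mul_self_eq_sum_eigenvalues_sq (hA : A.IsHermitian) :
    (A * A).trace = ∑ i, (hA.eigenvalues i : 𝕜) ^ 2 := by
  conv_lhs => rw [hA.spectral_theorem, ← map_mul, Unitary.conjStarAlgAut_apply, trace_mul_cycle,
    Unitary.coe_star_mul_self, one_mul, diagonal_mul_diagonal, trace_diagonal]
  simp [sq]

theorem sum_eigenvalues_sq_eq_sum_norm_sq (hA : A.IsHermitian) :
    ∑ i, hA.eigenvalues i ^ 2 = ∑ i, ∑ j, ‖A i j‖ ^ 2 := by
  have h := congrArg RCLike.re hA.trace_mul_self_eq_sum_eigenvalues_sq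
  simp only [trace, diag_apply, mul_apply, map_sum, ← RCLike.ofReal_pow, RCLike.ofReal_re] at h
  rw [← h]
  refine sum_congr rfl fun i _ => sum_congr rfl fun j _ => ?_
  rw [← hA.apply i j, norm_star, RCLike.star_def, RCLike.conj_mul]
  norm_cast

theorem sum_eigenvalues_mul_one_sub (hA : A.IsHermitian) :
    ∑ i, hA.eigenvalues i * (1 - hA.eigenvalues i) =
      RCLike.re A.trace - ∑ i, ∑ j, ‖A i j‖ ^ 2 := by
  rw [← hA.sum_eigenvalues_sq_eq_sum_norm_sq, hA.trace_eq_sum_eigenvalues, map_sum]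
  simp only [RCLike.ofReal_re, ← sum_sub_distrib]
  congr! 1 with i
  ring

end Matrix.IsHermitian

theorem card_filter_range_product_sub_eq (N : ℕ) (t : ℤ) :
    #{p ∈ range N ×ˢ range N | (p.1 : ℤ) - p.2 = t} = N - t.natAbs := by
  have h : #{p ∈ range N ×ˢ range N | (p.1 : ℤ) - p.2 = t} =
      #(Ico (max 0 t) (min N (N + t))) := by
    apply card_nbij' (fun p => (p.1 : ℤ)) (fun x => (x.toNat, (x - t).toNat)) <;>
      intro p hp <;>
      simp only [coe_filter, coe_Ico, mem_product, mem_range, Set.mem_ofPred_eq, Set.mem_Ico]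
        at hp ⊢
    · omega
    · omega
    · exact Prod.ext rfl (by dsimp only; omega)
    · omega
  rw [h, Int.card_Ico]
  omega

theorem sum_range_sum_range_sub {M : Type*} [AddCommMonoid M] (c : ℤ → M) (N : ℕ) :
    ∑ j ∈ range N, ∑ k ∈ range N, c (j - k) = ∑ t ∈ Ioo (-N : ℤ) N, (N - t.natAbs) • c t := by
  have hmaps : ∀ p ∈ range N ×ˢ range N, (p.1 : ℤ) - p.2 ∈ Ioo (-N : ℤ) N := by
    intro p hp
    simp only [mem_product, mem_range, mem_Ioo] at hp ⊢
    omega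
  rw [← sum_product', ← sum_fiberwise_of_maps_to hmaps]
  refine sum_congr rfl fun t _ => ?_
  rw [sum_congr rfl fun p hp => congrArg c (mem_filter.1 hp).2, sum_const,
    card_filter_range_product_sub_eq]

theorem HasSum.natCast_mul_sub_sum_range_sum_range_sub {c : ℤ → ℝ} {S : ℝ} (hc : HasSum c S)
    (N : ℕ) : N * S - ∑ j ∈ range N, ∑ k ∈ range N, c (j - k) =
      ∑' t, (min N t.natAbs : ℕ) * c t := by
  have hfin : ∀ t ∉ Ioo (-N : ℤ) N, (N - t.natAbs) • c t = 0 := by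
    intro t ht
    simp only [mem_Ioo, not_and_or, not_lt] at ht
    rw [Nat.sub_eq_zero_of_le (by omega), zero_smul]
  have h := (hc.mul_left (N : ℝ)).sub (hasSum_sum_of_ne_finset_zero hfin)
  rw [sum_range_sum_range_sub, ← h.tsum_eq]
  refine tsum_congr fun t => ?_
  have hN : (N : ℝ) = (N - t.natAbs : ℕ) + (min N t.natAbs : ℕ) := by
    exact_mod_cast (Nat.sub_add_min_cancel N t.natAbs).symm
  rw [nsmul_eq_mul, hN]
  ring

theorem tendsto_tsum_min_natAbs_div_mul {c : ℤ → ℝ} (hc : Summable c) :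
    Tendsto (fun N : ℕ => ∑' t, (min N t.natAbs : ℕ) / (N : ℝ) * c t) atTop (𝓝 0) := by
  have h := tendsto_tsum_of_dominated_convergence (𝓕 := atTop) (g := fun _ : ℤ => (0 : ℝ))
    (f := fun (N : ℕ) t => (min N t.natAbs : ℕ) / (N : ℝ) * c t) hc.abs ?_ ?_
  · simpa using h
  · intro t
    have heq : (fun N : ℕ => (min N t.natAbs : ℕ) / (N : ℝ) * c t) =ᶠ[atTop]
        fun N => t.natAbs / (N : ℝ) * c t := by
      filter_upwards [eventually_ge_atTop t.natAbs] with N hN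
      rw [min_eq_right hN]
    rw [tendsto_congr' heq]
    simpa using (tendsto_const_div_atTop_nhds_zero_nat (t.natAbs : ℝ)).mul_const (c t)
  · refine Eventually.of_forall fun N t => ?_
    rw [norm_mul, Real.norm_eq_abs]
    refine mul_le_of_le_one_left (abs_nonneg _) ?_
    rw [abs_div, Nat.abs_cast, Nat.abs_cast]
    exact div_le_one_of_le₀ (by exact_mod_cast min_le_left _ _) (Nat.cast_nonneg _)

theorem intervalIntegral_indicator_of_subset_Icc {E : Type*} [NormedAddCommGroup E]
    [NormedSpace ℝ E] {a b : ℝ} (hab : a ≤ b) {J : Set ℝ} (hJ : MeasurableSet J)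
    (hJsub : J ⊆ Set.Icc a b) (g : ℝ → E) :
    ∫ x in a..b, J.indicator g x = ∫ x in J, g x := by
  rw [intervalIntegral.integral_of_le hab, ← integral_Icc_eq_integral_Ioc,
    setIntegral_indicator hJ, Set.inter_eq_right.2 hJsub]

section Band

variable {J : Set ℝ}

theorem rho_eq_fourierCoeffOn (hJ : MeasurableSet J) (hJsub : J ⊆ Set.Icc (-Real.pi) Real.pi)
    (t : ℤ) :
    rho J t = fourierCoeffOn (neg_lt_self Real.pi_pos) (J.indicator 1) (-t) := by
  have hfourier : ∀ x : ℝ, fourier t (x : AddCircle (Real.pi - -Real.pi)) • J.indicator 1 x =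
      J.indicator (fun ω => Complex.exp (Complex.I * t * ω)) x := by
    intro x
    rw [Set.smul_indicator_one_apply]
    by_cases hx : x ∈ J
    · rw [Set.indicator_of_mem hx, Set.indicator_of_mem hx, fourier_coe_apply]
      congr 1
      push_cast
      field_simp
      ring
    · rw [Set.indicator_of_notMem hx, Set.indicator_of_notMem hx]
  rw [fourierCoeffOn_eq_integral, neg_neg, funext hfourier,
    intervalIntegral_indicator_of_subset_Icc (by linarith [Real.pi_pos]) hJ hJsub, rho,
    sub_neg_eq_add, ← two_mul, Complex.real_smul]
  push_cast
  rfl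

theorem rho_zero : rho J 0 = volume.real J / (2 * Real.pi) := by
  simp [rho, Measure.real, div_eq_inv_mul]

theorem hasSum_norm_rho_sq (hJ : MeasurableSet J) (hJsub : J ⊆ Set.Icc (-Real.pi) Real.pi) :
    HasSum (fun t => ‖rho J t‖ ^ 2) (rho J 0).re := by
  have hL2 : MemLp (J.indicator (1 : ℝ → ℂ)) 2 (volume.restrict (Set.Ioc (-Real.pi) Real.pi)) :=
    memLp_indicator_const 2 hJ (1 : ℂ) (Or.inr (measure_ne_top _ _))
  have hsq : (fun x => ‖J.indicator (1 : ℝ → ℂ) x‖ ^ 2) = J.indicator 1 := by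
    ext x
    by_cases hx : x ∈ J <;> simp [hx]
  have h := (Equiv.neg ℤ).hasSum_iff.2 (hasSum_sq_fourierCoeffOn (neg_lt_self Real.pi_pos) hL2)
  rw [hsq, intervalIntegral_indicator_of_subset_Icc (by linarith [Real.pi_pos]) hJ hJsub] at h
  convert h using 1
  · ext t
    simp [rho_eq_fourierCoeffOn hJ hJsub]
  · simp only [rho_zero, sub_neg_eq_add, ← two_mul, Pi.one_apply, setIntegral_const,
      smul_eq_mul, mul_one]
    norm_cast
    ring

end Band

theorem sum_eigenvalues_Rmat_mul_one_sub {J : Set ℝ} (hJ : MeasurableSet J)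
    (hJsub : J ⊆ Set.Icc (-Real.pi) Real.pi) {N : ℕ} (hH : (Rmat J N).IsHermitian) :
    ∑ j, hH.eigenvalues j * (1 - hH.eigenvalues j) =
      ∑' t, (min N t.natAbs : ℕ) * ‖rho J t‖ ^ 2 := by
  rw [hH.sum_eigenvalues_mul_one_sub,
    ← (hasSum_norm_rho_sq hJ hJsub).natCast_mul_sub_sum_range_sum_range_sub]
  congr 1
  · simp [trace, Rmat]
  · simp only [Rmat, of_apply]
    rw [Fin.sum_univ_eq_sum_range (fun j : ℕ => ∑ k : Fin N, ‖rho J (j - (k : ℕ))‖ ^ 2)]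
    exact sum_congr rfl fun j _ => Fin.sum_univ_eq_sum_range (fun k : ℕ => ‖rho J (j - k)‖ ^ 2) N

/-- With `𝕁(N) := Σ_j λ_j(N)(1-λ_j(N))`, every summand is nonnegative and
`lim_{N→∞} 𝕁(N)/N = 0`, i.e. `𝕁(N) = o(N)`. -/
theorem stmt9 (J : Set ℝ) (hJmeas : MeasurableSet J)
    (hJsub : J ⊆ Set.Icc (-Real.pi) Real.pi)
    (hH : ∀ N : ℕ, (Rmat J N).IsHermitian)
    (hlam : ∀ (N : ℕ) (j : Fin N), (hH N).eigenvalues j ∈ Set.Icc (0 : ℝ) 1) :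
    (∀ (N : ℕ) (j : Fin N), 0 ≤ (hH N).eigenvalues j * (1 - (hH N).eigenvalues j)) ∧
    Tendsto
      (fun N : ℕ => (∑ j : Fin N, (hH N).eigenvalues j * (1 - (hH N).eigenvalues j)) / N)
      atTop (𝓝 0) := by
  refine ⟨fun N j => mul_nonneg (hlam N j).1 (sub_nonneg.2 (hlam N j).2), ?_⟩
  refine (tendsto_tsum_min_natAbs_div_mul (hasSum_norm_rho_sq hJmeas hJsub).summable).congr
    fun N => ?_
  rw [sum_eigenvalues_Rmat_mul_one_sub hJmeas hJsub, ← tsum_div_const]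
  exact tsum_congr fun t => div_mul_eq_mul_div _ _ _
end
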